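/- Let i ≥ 1 be an integer, α_i = √(2(1+i)/(2+i)), and a real with α_i < a < √2. Then the cubic polynomial P(y) = y³ + (i(a²-1)/(2a²))y² - (1/a²)y - i/(2a²) satisfies P(1/a) < 0 and P(1) > 0, hence P has a root in the open interval (1/a, 1). -/
import Mathlib


/-- The cubic polynomial arising from the parabolicity condition `Δ_i(a,h) = 1`
for the pantographic orbit `Pan(i,a,h)`, in the variable `y = sin λ`. -/
noncomputable def Pcubic (i a y : ℝ) : ℝ :=
  y ^ 3 + (i * (a ^ 2 - 1) / (2 * a ^ 2)) * y ^ 2 - (1 / a ^ 2) * y - i / (2 * a ^ 2)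

theorem stmt_7 (i : ℕ) (hi : 1 ≤ i) (a : ℝ)
    (ha₁ : Real.sqrt (2 * (1 + i) / (2 + i)) < a) (ha₂ : a < Real.sqrt 2) :
    Pcubic i a (1 / a) < 0 ∧ 0 < Pcubic i a 1 ∧
    ∃ y ∈ Set.Ioo (1 / a) 1, Pcubic i a y = 0 := by
  have hiR : (1 : ℝ) ≤ i := by exact_mod_cast hi
  have harg : (1 : ℝ) ≤ 2 * (1 + i) / (2 + i) := by
    rw [le_div_iff₀ (by positivity)]; nlinarith
  have ha1 : (1 : ℝ) < a := lt_of_le_of_lt (Real.one_le_sqrt.mpr (by linarith)) ha₁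
  have ha0 : (0 : ℝ) < a := by linarith
  have hsq : 2 * (1 + (i:ℝ)) / (2 + i) < a ^ 2 :=
    (Real.sqrt_lt' ha0).mp ha₁
  have hsq' : 2 * (1 + (i:ℝ)) < (2 + i) * a ^ 2 := by
    rw [div_lt_iff₀ (by positivity)] at hsq; linarith
  have h1 : Pcubic i a (1 / a) = -(i / (2 * a ^ 4)) := by
    unfold Pcubic; field_simp; ring
  have h2 : Pcubic i a (1 / a) < 0 := by
    rw [h1]; have : (0:ℝ) < i / (2 * a ^ 4) := by positivity
    linarith
  have h3 : 0 < Pcubic i a 1 := by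
    unfold Pcubic
    have ha2 : (0:ℝ) < a ^ 2 := by positivity
    rw [show (1:ℝ)^3 + (i * (a ^ 2 - 1) / (2 * a ^ 2)) * 1 ^ 2 - (1 / a ^ 2) * 1
        - i / (2 * a ^ 2) = ((2 + i) * a ^ 2 - 2 * (1 + i)) / (2 * a ^ 2) by
      field_simp; ring]
    exact div_pos (by linarith) (by positivity)
  refine ⟨h2, h3, ?_⟩
  have hlt : 1 / a < 1 := by rw [div_lt_one ha0]; exact ha1
  have hcont : ContinuousOn (fun y => Pcubic i a y) (Set.Icc (1/a) 1) := by
    unfold Pcubic; fun_prop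
  have := intermediate_value_Ioo hlt.le hcont
  have h0 : (0:ℝ) ∈ Set.Ioo (Pcubic i a (1/a)) (Pcubic i a 1) := ⟨h2, h3⟩
  obtain ⟨y, hy, hy0⟩ := this h0
  exact ⟨y, hy, hy0⟩
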